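/- Anti-aligned Bloch vectors lie on a body diagonal: for any real phases α_{z,x}, if the two single-qubit Bloch vectors of ψ are opposite, i.e. x₁ = −x₂, y₁ = −y₂ and z₁ = −z₂, then |x₁| = |y₁| = |z₁|, i.e. the common Bloch vector points along a direction (±1,±1,±1) (possibly of length zero). -/

import Mathlib

open Matrix Complex Finset Kronecker

/-- Pauli X. -/
noncomputable def X2 : Matrix (Fin 2) (Fin 2) ℂ := !![0, 1; 1, 0]

/-- Pauli Y. -/
noncomputable def Y2 : Matrix (Fin 2) (Fin 2) ℂ := !![0, -Complex.I; Complex.I, 0]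

/-- Pauli Z. -/
noncomputable def Z2 : Matrix (Fin 2) (Fin 2) ℂ := !![1, 0; 0, -1]

/-- The inner product ⟨f, g⟩ = Σ conj(f v) g v (antilinear in the first argument). -/
noncomputable def dotc {ι : Type*} [Fintype ι] (f g : ι → ℂ) : ℂ :=
  ∑ v, (starRingEnd ℂ) (f v) * g v

/-- Two-qubit computational basis vector |ab⟩. -/
noncomputable def bv (a b : Fin 2) : Fin 2 × Fin 2 → ℂ := fun p => if p = (a, b) then 1 else 0

/-- Bell state Φ_{0,0} = (|00⟩+|11⟩)/√2. -/
noncomputable def Bell00 : Fin 2 × Fin 2 → ℂ := (Real.sqrt 2 : ℂ)⁻¹ • (bv 0 0 + bv 1 1)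

/-- Bell state Φ_{0,1} = (|00⟩−|11⟩)/√2. -/
noncomputable def Bell01 : Fin 2 × Fin 2 → ℂ := (Real.sqrt 2 : ℂ)⁻¹ • (bv 0 0 - bv 1 1)

/-- Bell state Φ_{1,0} = (|01⟩+|10⟩)/√2. -/
noncomputable def Bell10 : Fin 2 × Fin 2 → ℂ := (Real.sqrt 2 : ℂ)⁻¹ • (bv 0 1 + bv 1 0)

/-- Bell state Φ_{1,1} = (−|01⟩+|10⟩)/√2. -/
noncomputable def Bell11 : Fin 2 × Fin 2 → ℂ := (Real.sqrt 2 : ℂ)⁻¹ • (-(bv 0 1) + bv 1 0)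

/-- The fiducial state ψ = (1/2) Σ_{z,x} e^{iα_{z,x}} Φ_{z,x}. -/
noncomputable def psiF (α : Fin 2 → Fin 2 → ℝ) : Fin 2 × Fin 2 → ℂ :=
  (1 / 2 : ℂ) • (Complex.exp ((α 0 0 : ℝ) * Complex.I) • Bell00 +
    Complex.exp ((α 0 1 : ℝ) * Complex.I) • Bell01 +
    Complex.exp ((α 1 0 : ℝ) * Complex.I) • Bell10 +
    Complex.exp ((α 1 1 : ℝ) * Complex.I) • Bell11)

/-- Bloch component x₁ = ⟨ψ,(X⊗I)ψ⟩. -/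
noncomputable def blochX1 (α : Fin 2 → Fin 2 → ℝ) : ℂ :=
  dotc (psiF α) ((X2 ⊗ₖ (1 : Matrix (Fin 2) (Fin 2) ℂ)) *ᵥ psiF α)

/-- Bloch component y₁ = ⟨ψ,(Y⊗I)ψ⟩. -/
noncomputable def blochY1 (α : Fin 2 → Fin 2 → ℝ) : ℂ :=
  dotc (psiF α) ((Y2 ⊗ₖ (1 : Matrix (Fin 2) (Fin 2) ℂ)) *ᵥ psiF α)

/-- Bloch component z₁ = ⟨ψ,(Z⊗I)ψ⟩. -/
noncomputable def blochZ1 (α : Fin 2 → Fin 2 → ℝ) : ℂ :=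
  dotc (psiF α) ((Z2 ⊗ₖ (1 : Matrix (Fin 2) (Fin 2) ℂ)) *ᵥ psiF α)

/-- Bloch component x₂ = ⟨ψ,(I⊗X)ψ⟩. -/
noncomputable def blochX2 (α : Fin 2 → Fin 2 → ℝ) : ℂ :=
  dotc (psiF α) (((1 : Matrix (Fin 2) (Fin 2) ℂ) ⊗ₖ X2) *ᵥ psiF α)

/-- Bloch component y₂ = ⟨ψ,(I⊗Y)ψ⟩. -/
noncomputable def blochY2 (α : Fin 2 → Fin 2 → ℝ) : ℂ :=
  dotc (psiF α) (((1 : Matrix (Fin 2) (Fin 2) ℂ) ⊗ₖ Y2) *ᵥ psiF α)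

/-- Bloch component z₂ = ⟨ψ,(I⊗Z)ψ⟩. -/
noncomputable def blochZ2 (α : Fin 2 → Fin 2 → ℝ) : ℂ :=
  dotc (psiF α) (((1 : Matrix (Fin 2) (Fin 2) ℂ) ⊗ₖ Z2) *ᵥ psiF α)

/-!
Expanding ψ in the computational basis, its Bloch components become trigonometric expressions
in the phase differences, and x₁ ± x₂, y₁ ± y₂, z₁ ± z₂ each isolate a single term. Anti-alignment
thus says cos(α₁₀ - α₀₀) = sin(α₁₀ - α₀₁) = cos(α₀₁ - α₀₀) = 0, which leaves x₁, y₁, z₁ equal to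
½cos(α₁₁ - α₀₁), ½sin(α₁₁ - α₀₀), -½cos(α₁₁ - α₁₀). Here α₁₁ - α₀₀ differs from α₁₁ - α₀₁ by an odd
multiple of π/2 and α₁₁ - α₁₀ by a multiple of π, so all three have the same absolute value.
-/

open ComplexConjugate

lemma dotc_smul_mulVec_smul {ι : Type*} [Fintype ι] (M : Matrix ι ι ℂ) (c : ℂ) (u : ι → ℂ) :
    dotc (c • u) (M *ᵥ (c • u)) = (‖c‖ ^ 2 : ℝ) * dotc u (M *ᵥ u) := by
  simp only [dotc, mulVec_smul, Pi.smul_apply, smul_eq_mul, map_mul, Finset.mul_sum]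
  refine Finset.sum_congr rfl fun i _ => ?_
  rw [Complex.ofReal_pow, ← Complex.mul_conj']
  ring

lemma dotc_kronecker_one_mulVec {m n : Type*} [Fintype m] [Fintype n] [DecidableEq n]
    (A : Matrix m m ℂ) (v : m × n → ℂ) :
    dotc v ((A ⊗ₖ (1 : Matrix n n ℂ)) *ᵥ v) =
      ∑ c, dotc (fun a => v (a, c)) (A *ᵥ fun a => v (a, c)) := by
  simp only [dotc, mulVec, dotProduct, Fintype.sum_prod_type, kroneckerMap_apply, one_apply,
    mul_ite, mul_one, mul_zero, ite_mul, zero_mul, Finset.sum_ite_eq, Finset.mem_univ, if_true]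
  exact Finset.sum_comm

lemma dotc_one_kronecker_mulVec {m n : Type*} [Fintype m] [Fintype n] [DecidableEq m]
    (B : Matrix n n ℂ) (v : m × n → ℂ) :
    dotc v (((1 : Matrix m m ℂ) ⊗ₖ B) *ᵥ v) =
      ∑ a, dotc (fun c => v (a, c)) (B *ᵥ fun c => v (a, c)) := by
  simp only [dotc, mulVec, dotProduct, Fintype.sum_prod_type, kroneckerMap_apply, one_apply,
    ite_mul, one_mul, zero_mul, Finset.sum_ite_irrel, Finset.sum_const_zero, Finset.sum_ite_eq,
    Finset.mem_univ, if_true]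

section Qubit

variable (u : Fin 2 → ℂ)

lemma dotc_X2_mulVec : dotc u (X2 *ᵥ u) = ((2 * (conj (u 0) * u 1).re : ℝ) : ℂ) := by
  rw [ofReal_mul, ofReal_ofNat, re_eq_add_conj]
  simp only [dotc, mulVec, dotProduct, X2, of_apply, cons_val', cons_val_fin_one, cons_val_zero,
    cons_val_one, Fin.sum_univ_two, map_mul, conj_conj]
  ring

lemma dotc_Y2_mulVec : dotc u (Y2 *ᵥ u) = ((2 * (conj (u 0) * u 1).im : ℝ) : ℂ) := by
  rw [ofReal_mul, ofReal_ofNat, im_eq_sub_conj]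
  simp only [dotc, mulVec, dotProduct, Y2, of_apply, cons_val', cons_val_fin_one, cons_val_zero,
    cons_val_one, Fin.sum_univ_two, map_mul, conj_conj]
  field_simp
  ring_nf
  rw [I_sq]
  ring

lemma dotc_Z2_mulVec : dotc u (Z2 *ᵥ u) = ((‖u 0‖ ^ 2 - ‖u 1‖ ^ 2 : ℝ) : ℂ) := by
  rw [ofReal_sub, ofReal_pow, ofReal_pow, ← mul_conj', ← mul_conj']
  simp only [dotc, mulVec, dotProduct, Z2, of_apply, cons_val', cons_val_fin_one, cons_val_zero,
    cons_val_one, Fin.sum_univ_two]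
  ring

end Qubit

lemma Real.abs_sin_add_of_cos_eq_zero {x : ℝ} (hx : Real.cos x = 0) (y : ℝ) :
    |Real.sin (y + x)| = |Real.cos y| := by
  rcases Real.cos_eq_zero_iff_sin_eq.mp hx with h | h <;> simp [Real.sin_add, hx, h]

lemma Real.abs_cos_sub_of_sin_eq_zero {x : ℝ} (hx : Real.sin x = 0) (y : ℝ) :
    |Real.cos (y - x)| = |Real.cos y| := by
  rcases Real.sin_eq_zero_iff_cos_eq.mp hx with h | h <;> simp [Real.cos_sub, hx, h]

section Fiducial

variable (α : Fin 2 → Fin 2 → ℝ)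

noncomputable def phaseAmp : Fin 2 × Fin 2 → ℂ
  | (0, 0) => exp (α 0 0 * I) + exp (α 0 1 * I)
  | (0, 1) => exp (α 1 0 * I) - exp (α 1 1 * I)
  | (1, 0) => exp (α 1 0 * I) + exp (α 1 1 * I)
  | (1, 1) => exp (α 0 0 * I) - exp (α 0 1 * I)

lemma psiF_eq_smul_phaseAmp : psiF α = (((2 * √2)⁻¹ : ℝ) : ℂ) • phaseAmp α := by
  ext ⟨i, j⟩
  fin_cases i <;> fin_cases j <;>
    simp only [psiF, phaseAmp, Bell00, Bell01, Bell10, Bell11, bv, Pi.add_apply, Pi.sub_apply,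
      Pi.neg_apply, Pi.smul_apply, smul_eq_mul, Prod.mk.injEq, Fin.isValue, Fin.zero_eta,
      Fin.mk_one, zero_ne_one, one_ne_zero, and_true, and_false, and_self, if_true, if_false,
      ofReal_mul, ofReal_inv, ofReal_ofNat] <;> ring

lemma norm_inv_two_mul_sqrt_two_sq : ‖(((2 * √2)⁻¹ : ℝ) : ℂ)‖ ^ 2 = 1 / 8 := by
  rw [Complex.norm_real, Real.norm_eq_abs, sq_abs, inv_pow, mul_pow, Real.sq_sqrt zero_le_two]
  norm_num

lemma blochX1_eq :
    blochX1 α = ((Real.cos (α 1 0 - α 0 0) + Real.cos (α 1 1 - α 0 1)) / 2 : ℝ) := by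
  rw [blochX1, psiF_eq_smul_phaseAmp, dotc_smul_mulVec_smul, dotc_kronecker_one_mulVec,
    Fin.sum_univ_two, dotc_X2_mulVec, dotc_X2_mulVec, ← ofReal_add, ← ofReal_mul, ofReal_inj,
    norm_inv_two_mul_sqrt_two_sq]
  simp only [phaseAmp, mul_re, conj_re, conj_im, add_re, sub_re, add_im, sub_im,
    exp_ofReal_mul_I_re, exp_ofReal_mul_I_im, Real.cos_sub]
  ring

lemma blochY1_eq :
    blochY1 α = ((Real.sin (α 1 1 - α 0 0) + Real.sin (α 1 0 - α 0 1)) / 2 : ℝ) := by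
  rw [blochY1, psiF_eq_smul_phaseAmp, dotc_smul_mulVec_smul, dotc_kronecker_one_mulVec,
    Fin.sum_univ_two, dotc_Y2_mulVec, dotc_Y2_mulVec, ← ofReal_add, ← ofReal_mul, ofReal_inj,
    norm_inv_two_mul_sqrt_two_sq]
  simp only [phaseAmp, mul_im, conj_re, conj_im, add_re, sub_re, add_im, sub_im,
    exp_ofReal_mul_I_re, exp_ofReal_mul_I_im, Real.sin_sub]
  ring

lemma blochZ1_eq :
    blochZ1 α = ((Real.cos (α 0 1 - α 0 0) - Real.cos (α 1 1 - α 1 0)) / 2 : ℝ) := by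
  rw [blochZ1, psiF_eq_smul_phaseAmp, dotc_smul_mulVec_smul, dotc_kronecker_one_mulVec,
    Fin.sum_univ_two, dotc_Z2_mulVec, dotc_Z2_mulVec, ← ofReal_add, ← ofReal_mul, ofReal_inj,
    norm_inv_two_mul_sqrt_two_sq]
  simp only [phaseAmp, Complex.sq_norm, normSq_apply, add_re, sub_re, add_im, sub_im,
    exp_ofReal_mul_I_re, exp_ofReal_mul_I_im, Real.cos_sub]
  ring

lemma blochX2_eq :
    blochX2 α = ((Real.cos (α 1 0 - α 0 0) - Real.cos (α 1 1 - α 0 1)) / 2 : ℝ) := by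
  rw [blochX2, psiF_eq_smul_phaseAmp, dotc_smul_mulVec_smul, dotc_one_kronecker_mulVec,
    Fin.sum_univ_two, dotc_X2_mulVec, dotc_X2_mulVec, ← ofReal_add, ← ofReal_mul, ofReal_inj,
    norm_inv_two_mul_sqrt_two_sq]
  simp only [phaseAmp, mul_re, conj_re, conj_im, add_re, sub_re, add_im, sub_im,
    exp_ofReal_mul_I_re, exp_ofReal_mul_I_im, Real.cos_sub]
  ring

lemma blochY2_eq :
    blochY2 α = ((Real.sin (α 1 0 - α 0 1) - Real.sin (α 1 1 - α 0 0)) / 2 : ℝ) := by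
  rw [blochY2, psiF_eq_smul_phaseAmp, dotc_smul_mulVec_smul, dotc_one_kronecker_mulVec,
    Fin.sum_univ_two, dotc_Y2_mulVec, dotc_Y2_mulVec, ← ofReal_add, ← ofReal_mul, ofReal_inj,
    norm_inv_two_mul_sqrt_two_sq]
  simp only [phaseAmp, mul_im, conj_re, conj_im, add_re, sub_re, add_im, sub_im,
    exp_ofReal_mul_I_re, exp_ofReal_mul_I_im, Real.sin_sub]
  ring

lemma blochZ2_eq :
    blochZ2 α = ((Real.cos (α 0 1 - α 0 0) + Real.cos (α 1 1 - α 1 0)) / 2 : ℝ) := by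
  rw [blochZ2, psiF_eq_smul_phaseAmp, dotc_smul_mulVec_smul, dotc_one_kronecker_mulVec,
    Fin.sum_univ_two, dotc_Z2_mulVec, dotc_Z2_mulVec, ← ofReal_add, ← ofReal_mul, ofReal_inj,
    norm_inv_two_mul_sqrt_two_sq]
  simp only [phaseAmp, Complex.sq_norm, normSq_apply, add_re, sub_re, add_im, sub_im,
    exp_ofReal_mul_I_re, exp_ofReal_mul_I_im, Real.cos_sub]
  ring

end Fiducial

theorem stmt10 (α : Fin 2 → Fin 2 → ℝ)
    (hx : blochX1 α = -blochX2 α) (hy : blochY1 α = -blochY2 α)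
    (hz : blochZ1 α = -blochZ2 α) :
    ‖blochX1 α‖ = ‖blochY1 α‖ ∧
    ‖blochY1 α‖ = ‖blochZ1 α‖ := by
  rw [blochX1_eq, blochX2_eq, ← ofReal_neg, ofReal_inj] at hx
  rw [blochY1_eq, blochY2_eq, ← ofReal_neg, ofReal_inj] at hy
  rw [blochZ1_eq, blochZ2_eq, ← ofReal_neg, ofReal_inj] at hz
  have hcos₁₀ : Real.cos (α 1 0 - α 0 0) = 0 := by linarith
  have hsin : Real.sin (α 1 0 - α 0 1) = 0 := by linarith
  have hcos₀₁ : Real.cos (α 0 1 - α 0 0) = 0 := by linarith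
  have hy₁ : |Real.sin (α 1 1 - α 0 0)| = |Real.cos (α 1 1 - α 0 1)| := by
    rw [← sub_add_sub_cancel (α 1 1) (α 0 1), Real.abs_sin_add_of_cos_eq_zero hcos₀₁]
  have hz₁ : |Real.cos (α 1 1 - α 1 0)| = |Real.cos (α 1 1 - α 0 1)| := by
    rw [← sub_sub_sub_cancel_right (α 1 1) (α 1 0) (α 0 1), Real.abs_cos_sub_of_sin_eq_zero hsin]
  simp only [blochX1_eq, blochY1_eq, blochZ1_eq, norm_real, Real.norm_eq_abs, hcos₁₀, hsin, hcos₀₁,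
    zero_add, add_zero, zero_sub, abs_div, abs_neg, hy₁, hz₁, and_self]
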